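/- Let a = {aₙ} be a non-increasing, summable sequence of positive real numbers with tails rₙ^{(a)} and associated dimension function h_a, and suppose that the inverse function h_a⁻¹ is NOT doubling. Define the sequence b by b₁ = a₁ and b_{2k} = b_{2k+1} = a_k/2 for k ≥ 1. Then b is a non-increasing, summable positive sequence that is weak tail-equivalent to a (indeed r_{2n}^{(b)} = rₙ^{(a)} for all n) but not tail-equivalent to a: the ratios rₙ^{(b)}/rₙ^{(a)} are unbounded. Consequently, if every sequence weak tail-equivalent to a is tail-equivalent to a, then h_a⁻¹ is doubling. -/

import Mathlib

open Set Filter Metric MeasureTheory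
open scoped ENNReal NNReal Topology

noncomputable section

/-- The `h`-Hausdorff measure of `E ⊆ ℝ`:
`H^h(E) = lim_{δ→0⁺} inf {Σᵢ h(|Eᵢ|) : E ⊆ ⋃ᵢ Eᵢ, |Eᵢ| ≤ δ}`.
Since the inner infimum is antitone in `δ`, the limit as `δ → 0⁺` is the
supremum over `0 < δ ≤ A` (the parameter `A` records the domain `(0,A]` of the
dimension function `h`; by monotonicity the value of the limit is unchanged). -/
def Hh (A : ℝ) (h : ℝ → ℝ≥0∞) (E : Set ℝ) : ℝ≥0∞ :=
  ⨆ (δ : ℝ) (_ : 0 < δ) (_ : δ ≤ A),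
    ⨅ (t : ℕ → Set ℝ) (_ : E ⊆ ⋃ n, t n) (_ : ∀ n, Metric.diam (t n) ≤ δ),
      ∑' n, h (Metric.diam (t n))

/-- A `δ`-packing of `E`: a countable disjoint family of open balls centered at
points of `E` with diameters less than `δ`, recorded as a set of
(center, radius) pairs. -/
def IsPacking (E : Set ℝ) (δ : ℝ) (P : Set (ℝ × ℝ)) : Prop :=
  P.Countable ∧ (∀ p ∈ P, p.1 ∈ E ∧ 0 < p.2 ∧ 2 * p.2 < δ) ∧
    P.PairwiseDisjoint fun p => Metric.ball p.1 p.2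

/-- The `h`-packing pre-measure of `E ⊆ ℝ`:
`P₀^h(E) = lim_{δ→0⁺} sup {Σᵢ h(|Bᵢ|) : {Bᵢ} is a δ-packing of E}`.
The inner supremum is monotone in `δ`, so the limit as `δ → 0⁺` is the infimum
over `0 < δ ≤ A`. -/
def P0h (A : ℝ) (h : ℝ → ℝ≥0∞) (E : Set ℝ) : ℝ≥0∞ :=
  ⨅ (δ : ℝ) (_ : 0 < δ) (_ : δ ≤ A),
    ⨆ (P : Set (ℝ × ℝ)) (_ : IsPacking E δ P), ∑' p : P, h (2 * (p : ℝ × ℝ).2)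

/-- The `h`-packing measure: `P^h(E) = inf {Σᵢ P₀^h(Eᵢ) : E = ⋃ᵢ Eᵢ}`. -/
def Ph (A : ℝ) (h : ℝ → ℝ≥0∞) (E : Set ℝ) : ℝ≥0∞ :=
  ⨅ (t : ℕ → Set ℝ) (_ : E = ⋃ n, t n), ∑' n, P0h A h (t n)

/-- `h` is a dimension function with domain `(0, A]`: continuous, increasing,
doubling, positive, with `h(x) → 0` as `x → 0⁺`.  We record partial functions
`(0,A] → (0,∞]` as functions `ℝ → ℝ≥0∞` extended by `0` on nonpositive
arguments (the continuous extension at `0`). -/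
structure IsDimFun (A : ℝ) (h : ℝ → ℝ≥0∞) : Prop where
  posA : 0 < A
  zero_of_nonpos : ∀ x : ℝ, x ≤ 0 → h x = 0
  pos : ∀ x ∈ Set.Ioc (0 : ℝ) A, 0 < h x
  continuousOn : ContinuousOn h (Set.Ioc 0 A)
  strictMonoOn : StrictMonoOn h (Set.Ioc 0 A)
  doubling : ∃ τ : ℝ≥0∞, 0 < τ ∧ τ ≠ ∞ ∧ ∀ x : ℝ, 0 < x → 2 * x ≤ A → τ * h (2 * x) ≤ h x
  tendsto_zero : Tendsto h (nhdsWithin 0 (Set.Ioi 0)) (nhds 0)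

/-- `f ≼ h` on `(0, A]`: there is a (finite, positive) constant `c` with
`f(x) ≤ c·h(x)` for all `x ∈ (0,A]`. -/
def FLeq (A : ℝ) (f h : ℝ → ℝ≥0∞) : Prop :=
  ∃ c : ℝ≥0∞, 0 < c ∧ c ≠ ∞ ∧ ∀ x ∈ Set.Ioc (0 : ℝ) A, f x ≤ c * h x

/-- `f ≡ h` on `(0, A]`: `f ≼ h` and `h ≼ f`. -/
def FEquiv (A : ℝ) (f h : ℝ → ℝ≥0∞) : Prop := FLeq A f h ∧ FLeq A h f

/-- Tail of a series: `rTail a n = Σ_{j ≥ n} a j` (0-based indexing, so the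
paper's `r_n`, `n ≥ 1`, is `rTail a (n-1)`). -/
def rTail (a : ℕ → ℝ) (n : ℕ) : ℝ := ∑' k : ℕ, a (n + k)

/-- In the Cantor construction for the gap sequence `a`, the gaps are indexed
by the nodes `m ≥ 1` of the infinite binary tree in heap order (node `m` has
children `2m, 2m+1`), the gap at node `m` having length `a (m-1)`.  `nodeLen a m`
is the sum of the lengths of all gaps in the subtree rooted at `m`, i.e. the
length of the step interval corresponding to node `m`. -/
def nodeLen (a : ℕ → ℝ) (m : ℕ) : ℝ :=
  ∑' k : ℕ, ∑ i ∈ Finset.range (2 ^ k), a (m * 2 ^ k + i - 1)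

/-- Left endpoint of the `j`-th (0 ≤ j < 2^k, left to right) step-`k` interval
in the Cantor construction for the gap sequence `a` (realized in `[0, Σ a]`):
a left child keeps its parent's left endpoint; a right child's interval starts
after its left sibling's interval followed by the parent's gap. -/
def leftEnd (a : ℕ → ℝ) : ℕ → ℕ → ℝ
  | 0, _ => 0
  | (k + 1), j =>
    if j % 2 = 0 then leftEnd a k (j / 2)
    else leftEnd a k (j / 2) + nodeLen a (2 ^ (k + 1) + j - 1) + a (2 ^ k + j / 2 - 1)

/-- The Cantor set `C_a` associated with a (positive, non-increasing, summable)
sequence `a`, realized inside the interval `[0, Σ a]`: the intersection over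
`k` of the unions of the `2^k` step-`k` intervals. -/
def cantorSetOf (a : ℕ → ℝ) : Set ℝ :=
  ⋂ k : ℕ, ⋃ j ∈ Finset.range (2 ^ k),
    Set.Icc (leftEnd a k j) (leftEnd a k j + nodeLen a (2 ^ k + j))

/-- `h` (increasing and continuous on `(0, A]`) is associated to the sequence
`a`: the sequence `{h(r_n/n)}` is equivalent to `{1/n}`, i.e. there are
constants `0 < c₁, c₂ < ∞` with `c₁ ≤ n · h(r_n/n) ≤ c₂` for all `n ≥ 1`
(0-based: `n ≥ 1` corresponds to `n+1` below). -/
def IsAssociated (A : ℝ) (h : ℝ → ℝ≥0∞) (a : ℕ → ℝ) : Prop :=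
  ContinuousOn h (Set.Ioc 0 A) ∧ StrictMonoOn h (Set.Ioc 0 A) ∧
  ∃ c₁ c₂ : ℝ≥0∞, 0 < c₁ ∧ c₂ ≠ ∞ ∧ ∀ n : ℕ,
    c₁ ≤ ((n : ℝ≥0∞) + 1) * h (rTail a n / ((n : ℝ) + 1)) ∧
    ((n : ℝ≥0∞) + 1) * h (rTail a n / ((n : ℝ) + 1)) ≤ c₂

/-- Weak tail-equivalence: there are positive integers `j, k` with
`r_n^{(a)} ≥ r_{jn}^{(b)}/j` and `r_n^{(b)} ≥ r_{kn}^{(a)}/k` for all `n ≥ 1`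
(0-based shift: paper's `r_n` is `rTail · (n-1)`). -/
def WeakTailEquiv (a b : ℕ → ℝ) : Prop :=
  ∃ j k : ℕ, 0 < j ∧ 0 < k ∧
    (∀ n : ℕ, rTail b (j * (n + 1) - 1) / (j : ℝ) ≤ rTail a n) ∧
    (∀ n : ℕ, rTail a (k * (n + 1) - 1) / (k : ℝ) ≤ rTail b n)

/-- Tail-equivalence: the sequences of tails are equivalent, i.e. the ratios
`r_n^{(a)}/r_n^{(b)}` are bounded above and below by positive constants. -/
def TailEquiv (a b : ℕ → ℝ) : Prop :=
  ∃ c₁ c₂ : ℝ, 0 < c₁ ∧ ∀ n : ℕ,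
    c₁ ≤ rTail a n / rTail b n ∧ rTail a n / rTail b n ≤ c₂

/-- The Hausdorff dimension of `E`, computed from the `h_s`-Hausdorff measures,
`h_s(x) = x^s`:  `dim_H E = sup {s > 0 : H^{h_s}(E) = ∞}`. -/
def hausdDim (A : ℝ) (E : Set ℝ) : ℝ≥0∞ :=
  ⨆ (s : ℝ) (_ : 0 < s) (_ : Hh A (fun x => ENNReal.ofReal (x ^ s)) E = ∞),
    ENNReal.ofReal s

/-- The packing dimension of `E`: `dim_P E = sup {s > 0 : P^{h_s}(E) = ∞}`. -/
def packDim (A : ℝ) (E : Set ℝ) : ℝ≥0∞ :=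
  ⨆ (s : ℝ) (_ : 0 < s) (_ : Ph A (fun x => ENNReal.ofReal (x ^ s)) E = ∞),
    ENNReal.ofReal s

/-- The pre-packing dimension of `E`: `dim_{P₀} E = sup {s > 0 : P₀^{h_s}(E) = ∞}`. -/
def prePackDim (A : ℝ) (E : Set ℝ) : ℝ≥0∞ :=
  ⨆ (s : ℝ) (_ : 0 < s) (_ : P0h A (fun x => ENNReal.ofReal (x ^ s)) E = ∞),
    ENNReal.ofReal s

/-- `f ≼ h` on the set `S`, for real-valued functions. -/
def RLeqOn (S : Set ℝ) (f h : ℝ → ℝ) : Prop :=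
  ∃ c : ℝ, 0 < c ∧ ∀ x ∈ S, f x ≤ c * h x

/-- `f ≡ h` on the set `S`, for real-valued functions. -/
def REquivOn (S : Set ℝ) (f h : ℝ → ℝ) : Prop := RLeqOn S f h ∧ RLeqOn S h f

/-- Real-valued version of `IsAssociated`: `h : (0,A] → (0,∞)` is increasing,
continuous, positive and `{h(r_n/n)} ≡ {1/n}`. -/
def IsAssociatedR (A : ℝ) (h : ℝ → ℝ) (a : ℕ → ℝ) : Prop :=
  ContinuousOn h (Set.Ioc 0 A) ∧ StrictMonoOn h (Set.Ioc 0 A) ∧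
  (∀ x ∈ Set.Ioc (0 : ℝ) A, 0 < h x) ∧
  ∃ c₁ c₂ : ℝ, 0 < c₁ ∧ ∀ n : ℕ,
    c₁ ≤ ((n : ℝ) + 1) * h (rTail a n / ((n : ℝ) + 1)) ∧
    ((n : ℝ) + 1) * h (rTail a n / ((n : ℝ) + 1)) ≤ c₂

end

/-! Write `x_n = r_n / (n + 1)`, so that `c₁ / (n + 1) ≤ h (x_n) ≤ C / (n + 1)`.  If the tails
of `b` were at most `K` times those of `a`, then, since `r^{(b)}_{2n+1} = r^{(a)}_n`, we would
have `r_n ≤ K r_{2n+1}`, and iterating, `r_m ≤ K^t r_n` whenever `n + 1 ≤ 2^t (m + 1)`: the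
averages `x_n` would be comparable on blocks `n + 1 ≤ L (m + 1)`.  Given `h (v) = 2 h (u)`,
bracket `x_{n+1} ≤ u < x_n`; then `h (v) < 2C / (n + 1)`, which forces `v < x_m` for an index
`m + 1 ≈ (c₁ / 2C) (n + 1)` in a block of bounded length around `n`, hence `v ≤ M u`: the
inverse of `h` would be doubling. -/

section Tail

variable {a : ℕ → ℝ}

lemma summable_shift (asum : Summable a) (n : ℕ) : Summable fun k => a (n + k) := by
  simpa only [add_comm n] using (summable_nat_add_iff n).2 asum

lemma rTail_eq_add_rTail_succ (asum : Summable a) (n : ℕ) :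
    rTail a n = a n + rTail a (n + 1) := by
  rw [rTail, (summable_shift asum n).tsum_eq_zero_add, rTail, add_zero]
  simp only [add_assoc, add_comm 1]

lemma rTail_pos (apos : ∀ n, 0 < a n) (asum : Summable a) (n : ℕ) : 0 < rTail a n :=
  (summable_shift asum n).tsum_pos (fun _ => (apos _).le) 0 (apos _)

lemma rTail_antitone (anonneg : ∀ n, 0 ≤ a n) (asum : Summable a) : Antitone (rTail a) :=
  antitone_nat_of_succ_le fun n => by
    rw [rTail_eq_add_rTail_succ asum n]; linarith [anonneg n]

end Tail

section DyadicDecay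

variable {f : ℕ → ℝ} {K : ℝ}

lemma le_pow_mul_of_le_mul_two_mul_add_one (hK0 : 0 ≤ K)
    (hK : ∀ n, f n ≤ K * f (2 * n + 1)) (t n : ℕ) :
    f n ≤ K ^ t * f (2 ^ t * (n + 1) - 1) := by
  induction t with
  | zero => simp
  | succ t ih =>
    have hidx : 2 * (2 ^ t * (n + 1) - 1) + 1 = 2 ^ (t + 1) * (n + 1) - 1 := by
      have : 0 < 2 ^ t * (n + 1) := by positivity
      have : 2 ^ (t + 1) * (n + 1) = 2 * (2 ^ t * (n + 1)) := by ring
      omega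
    calc f n ≤ K ^ t * f (2 ^ t * (n + 1) - 1) := ih
      _ ≤ K ^ t * (K * f (2 * (2 ^ t * (n + 1) - 1) + 1)) := by gcongr; exact hK _
      _ = K ^ (t + 1) * f (2 ^ (t + 1) * (n + 1) - 1) := by rw [hidx, pow_succ]; ring

lemma exists_div_succ_le_mul_div_succ (hf : Antitone f) (hf0 : ∀ n, 0 ≤ f n) (hK0 : 0 ≤ K)
    (hK : ∀ n, f n ≤ K * f (2 * n + 1)) (L : ℕ) :
    ∃ M : ℝ, ∀ m n : ℕ, n + 1 ≤ L * (m + 1) →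
      f m / (m + 1) ≤ M * (f n / (n + 1)) := by
  refine ⟨(2 * K) ^ L, fun m n hmn => ?_⟩
  have hblock : n + 1 ≤ 2 ^ L * (m + 1) :=
    hmn.trans (Nat.mul_le_mul_right _ Nat.lt_two_pow_self.le)
  have hfm : f m ≤ K ^ L * f n :=
    (le_pow_mul_of_le_mul_two_mul_add_one hK0 hK L m).trans
      (by gcongr; exact hf (by omega))
  have hratio : ((n : ℝ) + 1) ≤ 2 ^ L * ((m : ℝ) + 1) := by exact_mod_cast hblock
  rw [div_le_iff₀ (by positivity)]
  calc f m ≤ K ^ L * f n := hfm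
    _ = K ^ L * ((f n / (n + 1)) * (n + 1)) := by field_simp
    _ ≤ K ^ L * ((f n / (n + 1)) * (2 ^ L * (m + 1))) := by
        gcongr; exact div_nonneg (hf0 n) (by positivity)
    _ = (2 * K) ^ L * (f n / (n + 1)) * (m + 1) := by ring

end DyadicDecay

lemma exists_le_lt_of_antitone {α : Type*} [LinearOrder α] {x : ℕ → α} (hx : Antitone x)
    {u : α} {q : ℕ} (hq : u < x q)
    (hex : ∃ k, x k ≤ u) : ∃ n, q ≤ n ∧ x (n + 1) ≤ u ∧ u < x n := by
  classical
  have hq' : q < Nat.find hex := by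
    by_contra! h
    exact (hq.trans_le (hx h)).not_ge (Nat.find_spec hex)
  refine ⟨Nat.find hex - 1, by omega, ?_, ?_⟩
  · rw [Nat.sub_add_cancel (by omega)]; exact Nat.find_spec hex
  · exact lt_of_not_ge (Nat.find_min hex (by omega))

lemma exists_le_of_map_le_div_succ {A C u : ℝ} {φ : ℝ → ℝ} {x : ℕ → ℝ}
    (hφ : StrictMonoOn φ (Set.Ioc 0 A)) (hxA : ∀ n, x n ∈ Set.Ioc (0 : ℝ) A)
    (hup : ∀ n : ℕ, φ (x n) ≤ C / ((n : ℝ) + 1)) (hu : u ∈ Set.Ioc (0 : ℝ) A) (hφu : 0 < φ u) :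
    ∃ k, x k ≤ u := by
  obtain ⟨k, hk⟩ := exists_nat_gt (C / φ u)
  refine ⟨k, ((hφ.lt_iff_lt (hxA k) hu).1 ((hup k).trans_lt ?_)).le⟩
  rw [div_lt_iff₀ hφu] at hk
  rw [div_lt_iff₀ (by positivity)]
  nlinarith

lemma exists_mul_le_of_le_two_mul {A c₁ C : ℝ} {φ : ℝ → ℝ} {x : ℕ → ℝ}
    (hφ : StrictMonoOn φ (Set.Ioc 0 A)) (hφ0 : ∀ u ∈ Set.Ioc (0 : ℝ) A, 0 < φ u) (hc₁ : 0 < c₁)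
    (hx : Antitone x) (hxA : ∀ n, x n ∈ Set.Ioc (0 : ℝ) A)
    (hlow : ∀ n : ℕ, c₁ / ((n : ℝ) + 1) ≤ φ (x n))
    (hup : ∀ n : ℕ, φ (x n) ≤ C / ((n : ℝ) + 1))
    (hblock : ∀ L : ℕ, ∃ M : ℝ, ∀ m n : ℕ, n + 1 ≤ L * (m + 1) → x m ≤ M * x n) :
    ∃ τ : ℝ, 0 < τ ∧ ∀ u ∈ Set.Ioc (0 : ℝ) A, ∀ v ∈ Set.Ioc (0 : ℝ) A,
      φ v ≤ 2 * φ u → τ * v ≤ u := by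
  obtain ⟨q, hq⟩ := exists_nat_ge (2 * C / c₁)
  have hCq : 2 * C ≤ ((q : ℝ) + 1) * c₁ := by
    rw [div_le_iff₀ hc₁] at hq; nlinarith
  obtain ⟨M, hM⟩ := hblock (2 * (q + 1))
  have hM1 : 1 ≤ M :=
    le_of_mul_le_mul_right (by simpa using hM 0 0 (by omega)) (hxA 0).1
  have hA : 0 < A := (hxA 0).1.trans_le (hxA 0).2
  refine ⟨min (x (q + 1) / A) M⁻¹, lt_min (div_pos (hxA _).1 hA) (by positivity), ?_⟩
  intro u hu v hv huv
  rcases le_or_gt (x (q + 1)) u with hqu | hqu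
  · calc min (x (q + 1) / A) M⁻¹ * v ≤ x (q + 1) / A * A :=
          mul_le_mul (min_le_left _ _) hv.2 hv.1.le (div_pos (hxA _).1 hA).le
      _ ≤ u := by rwa [div_mul_cancel₀ _ hA.ne']
  obtain ⟨n, hqn, hxn, hux⟩ :=
    exists_le_lt_of_antitone hx hqu (exists_le_of_map_le_div_succ hφ hxA hup hu (hφ0 u hu))
  -- The index `m = d - 1` has `φ (x m) ≥ c₁ / d ≥ 2C / (n + 1) > φ v`, while
  -- `n + 1 < 2 (q + 1) d` keeps it in the block of `n`.
  set d := (n + 1) / (q + 1)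
  have hd1 : 1 ≤ d := Nat.div_pos (by omega) (by omega)
  have hdq : d * (q + 1) ≤ n + 1 := Nat.div_mul_le_self _ _
  have hnd : n + 1 < d * (q + 1) + (q + 1) := Nat.lt_div_mul_add (by omega)
  have hvm : v < x (d - 1) := by
    have hdR : ((d - 1 : ℕ) : ℝ) + 1 = d := by rw [Nat.cast_sub hd1]; ring
    have hdqR : (d : ℝ) * ((q : ℝ) + 1) ≤ (n : ℝ) + 1 := by exact_mod_cast hdq
    have h2C : 2 * C / ((n : ℝ) + 1) ≤ c₁ / d := by
      rw [div_le_div_iff₀ (by positivity) (by positivity)]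
      nlinarith
    refine (hφ.lt_iff_lt hv (hxA _)).1 ?_
    calc φ v ≤ 2 * φ u := huv
      _ < 2 * φ (x n) := by gcongr; exact hφ hu (hxA n) hux
      _ ≤ 2 * (C / ((n : ℝ) + 1)) := by gcongr; exact hup n
      _ ≤ c₁ / d := by rw [← mul_div_assoc]; exact h2C
      _ ≤ φ (x (d - 1)) := by rw [← hdR]; exact hlow _
  have hblk : n + 1 + 1 ≤ 2 * (q + 1) * (d - 1 + 1) := by
    rw [Nat.sub_add_cancel hd1]; nlinarith
  calc min (x (q + 1) / A) M⁻¹ * v ≤ M⁻¹ * (M * x (n + 1)) :=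
        mul_le_mul (min_le_right _ _) (hvm.le.trans (hM _ _ hblk)) hv.1.le (by positivity)
    _ ≤ u := by rw [← mul_assoc, inv_mul_cancel₀ (by positivity), one_mul]; exact hxn

lemma inv_doubling_of_rTail_le_mul {A : ℝ} {a : ℕ → ℝ} (apos : ∀ n, 0 < a n)
    (asum : Summable a) (hra : rTail a 0 ≤ A) {ha ha' : ℝ → ℝ} (haa : IsAssociatedR A ha a)
    (hinv : ∀ x ∈ Set.Ioc (0 : ℝ) A, ha' (ha x) = x) {K : ℝ}
    (hK : ∀ n, rTail a n ≤ K * rTail a (2 * n + 1)) :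
    ∃ τ : ℝ, 0 < τ ∧ ∀ y : ℝ, y ∈ ha '' Set.Ioc (0 : ℝ) A →
      2 * y ∈ ha '' Set.Ioc (0 : ℝ) A → τ * ha' (2 * y) ≤ ha' y := by
  obtain ⟨-, hmono, hpos, c₁, C, hc₁, hassoc⟩ := haa
  have hr := rTail_pos apos asum
  have hanti := rTail_antitone (fun n => (apos n).le) asum
  have hK0 : 0 ≤ K := by nlinarith [hK 0, hr 0, hr 1]
  set x : ℕ → ℝ := fun n => rTail a n / ((n : ℝ) + 1)
  have hx : Antitone x := fun m n hmn =>
    div_le_div₀ (hr m).le (hanti hmn) (by positivity) (by gcongr)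
  have hxA : ∀ n, x n ∈ Set.Ioc (0 : ℝ) A := fun n =>
    ⟨div_pos (hr n) (by positivity),
      (div_le_self (hr n).le (by simp)).trans ((hanti n.zero_le).trans hra)⟩
  have hlow : ∀ n : ℕ, c₁ / ((n : ℝ) + 1) ≤ ha (x n) := fun n => by
    rw [div_le_iff₀ (by positivity), mul_comm]; exact (hassoc n).1
  have hup : ∀ n : ℕ, ha (x n) ≤ C / ((n : ℝ) + 1) := fun n => by
    rw [le_div_iff₀ (by positivity), mul_comm]; exact (hassoc n).2
  obtain ⟨τ, hτ, hτuv⟩ := exists_mul_le_of_le_two_mul hmono hpos hc₁ hx hxA hlow hup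
    (exists_div_succ_le_mul_div_succ hanti (fun n => (hr n).le) hK0 hK)
  refine ⟨τ, hτ, ?_⟩
  rintro _ ⟨u, hu, rfl⟩ ⟨v, hv, hvu⟩
  rw [← hvu, hinv v hv, hinv u hu]
  exact hτuv u hu v hv hvu.le

noncomputable def splitSeq (a : ℕ → ℝ) (n : ℕ) : ℝ :=
  if n = 0 then a 0 else a ((n - 1) / 2) / 2

section SplitSeq

variable {a : ℕ → ℝ}

lemma splitSeq_two_mul_add_one (k : ℕ) : splitSeq a (2 * k + 1) = a k / 2 := by
  simp only [splitSeq, if_neg (by omega : 2 * k + 1 ≠ 0)]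
  congr 2; omega

lemma splitSeq_two_mul_add_two (k : ℕ) : splitSeq a (2 * k + 2) = a k / 2 := by
  simp only [splitSeq, if_neg (by omega : 2 * k + 2 ≠ 0)]
  congr 2; omega

lemma splitSeq_pos (apos : ∀ n, 0 < a n) (n : ℕ) : 0 < splitSeq a n := by
  unfold splitSeq
  split_ifs
  exacts [apos 0, half_pos (apos _)]

lemma splitSeq_succ_le (apos : ∀ n, 0 < a n) (amono : Antitone a) (n : ℕ) :
    splitSeq a (n + 1) ≤ splitSeq a n := by
  rcases n with _ | n
  · simp only [splitSeq, zero_add, one_ne_zero, ↓reduceIte, tsub_self, Nat.zero_div,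
      half_le_self_iff]
    exact (apos 0).le
  · simp only [splitSeq, if_neg (Nat.succ_ne_zero _)]
    gcongr
    exact amono (by omega)

lemma summable_splitSeq (asum : Summable a) : Summable (splitSeq a) := by
  refine (summable_nat_add_iff 1).1 (Summable.even_add_odd ?_ ?_)
  · simpa only [splitSeq_two_mul_add_one] using asum.div_const 2
  · simpa only [splitSeq_two_mul_add_two] using asum.div_const 2

lemma rTail_splitSeq_two_mul_add_one (asum : Summable a) (n : ℕ) :
    rTail (splitSeq a) (2 * n + 1) = rTail a n := by
  have heven : (fun k => splitSeq a (2 * n + 1 + 2 * k)) = fun k => a (n + k) / 2 := by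
    ext k; rw [← splitSeq_two_mul_add_one]; ring_nf
  have hodd : (fun k => splitSeq a (2 * n + 1 + (2 * k + 1))) = fun k => a (n + k) / 2 := by
    ext k; rw [← splitSeq_two_mul_add_two]; ring_nf
  have hhalf := (summable_shift asum n).div_const 2
  rw [rTail, ← tsum_even_add_odd (f := fun k => splitSeq a (2 * n + 1 + k))
    (by rw [heven]; exact hhalf) (by rw [hodd]; exact hhalf), heven, hodd, tsum_div_const, rTail]
  ring

lemma rTail_le_rTail_splitSeq (apos : ∀ n, 0 < a n) (asum : Summable a) (n : ℕ) :
    rTail a n ≤ rTail (splitSeq a) n := by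
  rw [← rTail_splitSeq_two_mul_add_one asum n]
  exact rTail_antitone (fun k => (splitSeq_pos apos k).le) (summable_splitSeq asum) (by omega)

lemma weakTailEquiv_splitSeq (apos : ∀ n, 0 < a n) (asum : Summable a) :
    WeakTailEquiv a (splitSeq a) := by
  refine ⟨2, 1, two_pos, one_pos, fun n => ?_, fun n => ?_⟩
  · rw [show 2 * (n + 1) - 1 = 2 * n + 1 by omega, rTail_splitSeq_two_mul_add_one asum]
    exact div_le_self (rTail_pos apos asum n).le (by norm_num)
  · rw [one_mul, Nat.add_sub_cancel, Nat.cast_one, div_one]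
    exact rTail_le_rTail_splitSeq apos asum n

end SplitSeq

theorem not_tailEquiv_of_inv_not_doubling_general (A : ℝ) (a : ℕ → ℝ)
    (apos : ∀ n, 0 < a n) (amono : ∀ n, a (n + 1) ≤ a n) (asum : Summable a)
    (hra : rTail a 0 ≤ A)
    (ha ha' : ℝ → ℝ) (haa : IsAssociatedR A ha a)
    (hinv : ∀ x ∈ Set.Ioc (0 : ℝ) A, ha' (ha x) = x)
    (hnd : ¬ ∃ τ : ℝ, 0 < τ ∧ ∀ y : ℝ, y ∈ ha '' Set.Ioc (0 : ℝ) A →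
      2 * y ∈ ha '' Set.Ioc (0 : ℝ) A → τ * ha' (2 * y) ≤ ha' y)
    (b : ℕ → ℝ)
    (hbdef : b = fun n => if n = 0 then a 0 else a ((n - 1) / 2) / 2) :
    (∀ n, 0 < b n) ∧ (∀ n, b (n + 1) ≤ b n) ∧ Summable b ∧
    (∀ n : ℕ, rTail b (2 * n + 1) = rTail a n) ∧
    WeakTailEquiv a b ∧
    (¬ ∃ c₂ : ℝ, ∀ n : ℕ, rTail b n / rTail a n ≤ c₂) ∧
    ¬ (∀ b' : ℕ → ℝ, (∀ n, 0 < b' n) → (∀ n, b' (n + 1) ≤ b' n) →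
        Summable b' → WeakTailEquiv a b' → TailEquiv b' a) := by
  obtain rfl : b = splitSeq a := hbdef
  have bpos := splitSeq_pos apos
  have bmono := splitSeq_succ_le apos (antitone_nat_of_succ_le amono)
  have bsum := summable_splitSeq asum
  have hweak := weakTailEquiv_splitSeq apos asum
  have hrb := rTail_splitSeq_two_mul_add_one asum
  have hunbdd : ¬ ∃ c₂ : ℝ, ∀ n : ℕ, rTail (splitSeq a) n / rTail a n ≤ c₂ := by
    rintro ⟨c₂, hc₂⟩
    refine hnd (inv_doubling_of_rTail_le_mul apos asum hra haa hinv (K := c₂) fun n => ?_)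
    have h := hc₂ (2 * n + 1)
    rwa [hrb, div_le_iff₀ (rTail_pos apos asum _)] at h
  refine ⟨bpos, bmono, bsum, hrb, hweak, hunbdd, fun H => ?_⟩
  obtain ⟨_, c₂, _, hc₂⟩ := H _ bpos bmono bsum hweak
  exact hunbdd ⟨c₂, fun n => (hc₂ n).2⟩

/-- Theorem, (3) ⇒ (1), by contraposition: if the inverse
of the dimension function `h_a` associated to `a` is *not* doubling, then the
sequence `b` given by `b₁ = a₁`, `b_{2k} = b_{2k+1} = a_k/2` (0-based below:
`b 0 = a 0`, `b (2k+1) = b (2k+2) = a k / 2`) is a non-increasing summable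
positive sequence, weak tail-equivalent to `a` (indeed `r_{2n}^{(b)} = rₙ^{(a)}`),
but not tail-equivalent to `a`: the ratios `rₙ^{(b)}/rₙ^{(a)}` are unbounded.
Consequently, if every sequence weak tail-equivalent to `a` is tail-equivalent
to `a`, then `h_a⁻¹` is doubling. -/
theorem not_tailEquiv_of_inv_not_doubling (A : ℝ) (hA : 0 < A) (a : ℕ → ℝ)
    (apos : ∀ n, 0 < a n) (amono : ∀ n, a (n + 1) ≤ a n) (asum : Summable a)
    (hra : rTail a 0 ≤ A)
    (ha ha' : ℝ → ℝ) (haa : IsAssociatedR A ha a)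
    (hinv : ∀ x ∈ Set.Ioc (0 : ℝ) A, ha' (ha x) = x)
    (hnd : ¬ ∃ τ : ℝ, 0 < τ ∧ ∀ y : ℝ, y ∈ ha '' Set.Ioc (0 : ℝ) A →
      2 * y ∈ ha '' Set.Ioc (0 : ℝ) A → τ * ha' (2 * y) ≤ ha' y)
    (b : ℕ → ℝ)
    (hbdef : b = fun n => if n = 0 then a 0 else a ((n - 1) / 2) / 2) :
    (∀ n, 0 < b n) ∧ (∀ n, b (n + 1) ≤ b n) ∧ Summable b ∧
    (∀ n : ℕ, rTail b (2 * n + 1) = rTail a n) ∧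
    WeakTailEquiv a b ∧
    (¬ ∃ c₂ : ℝ, ∀ n : ℕ, rTail b n / rTail a n ≤ c₂) ∧
    ¬ (∀ b' : ℕ → ℝ, (∀ n, 0 < b' n) → (∀ n, b' (n + 1) ≤ b' n) →
        Summable b' → WeakTailEquiv a b' → TailEquiv b' a) :=
  not_tailEquiv_of_inv_not_doubling_general A a apos amono asum hra ha ha' haa hinv hnd b hbdef
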